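/- Let W be the affine Coxeter group generated by the affine reflections associated to a crystallographic root system Φ spanning ℝ^n. If λ ∈ L has integral dimension k, then ℓ_R(t_λ) ≤ 2k, and moreover there exists an element u ∈ W with ℓ_R(u) ≤ k that sends the origin to λ (i.e., u(0) = λ). -/

import Mathlib

open RealInnerProductSpace

noncomputable section

/-- A crystallographic (reduced) root system spanning `ℝⁿ`. -/
structure IsRootSystem (n : ℕ) (Φ : Set (EuclideanSpace ℝ (Fin n))) : Prop where
  finite : Φ.Finite
  nonzero : ∀ α ∈ Φ, α ≠ 0
  spans : Submodule.span ℝ Φ = ⊤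
  reflect_mem : ∀ α ∈ Φ, ∀ β ∈ Φ, β - (2 * ⟪β, α⟫ / ⟪α, α⟫) • α ∈ Φ
  crystallographic : ∀ α ∈ Φ, ∀ β ∈ Φ, ∃ z : ℤ, (z : ℝ) = 2 * ⟪β, α⟫ / ⟪α, α⟫
  reduced : ∀ α ∈ Φ, ∀ c : ℝ, c • α ∈ Φ → c = 1 ∨ c = -1

/-- The coroot `α∨ = (2/⟨α,α⟩) α`. -/
def coroot {n : ℕ} (α : EuclideanSpace ℝ (Fin n)) : EuclideanSpace ℝ (Fin n) :=
  (2 / ⟪α, α⟫) • α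

lemma affRefl_involutive {n : ℕ} (α : EuclideanSpace ℝ (Fin n)) (i : ℤ) :
    Function.Involutive
      (fun x : EuclideanSpace ℝ (Fin n) => x - (⟪x, α⟫ - (i : ℝ)) • coroot α) := by
  intro x
  by_cases h : ⟪α, α⟫ = 0
  · simp only [coroot, h]
    simp
  · have hv : ⟪coroot α, α⟫ = 2 := by
      rw [coroot, real_inner_smul_left, div_mul_cancel₀ _ h]
    dsimp only
    rw [inner_sub_left, real_inner_smul_left, hv]
    module

/-- The affine reflection `r_{α,i}` across the hyperplane `{x : ⟨x,α⟩ = i}`,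
as a permutation of `ℝⁿ`. -/
def affRefl {n : ℕ} (α : EuclideanSpace ℝ (Fin n)) (i : ℤ) :
    Equiv.Perm (EuclideanSpace ℝ (Fin n)) :=
  (affRefl_involutive α i).toPerm _

/-- The set `R` of all affine reflections `r_{α,i}`, `α ∈ Φ`, `i ∈ ℤ`. -/
def affR {n : ℕ} (Φ : Set (EuclideanSpace ℝ (Fin n))) :
    Set (Equiv.Perm (EuclideanSpace ℝ (Fin n))) :=
  {w | ∃ α ∈ Φ, ∃ i : ℤ, w = affRefl α i}

/-- The affine Coxeter group `W` generated by all affine reflections. -/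
def affW {n : ℕ} (Φ : Set (EuclideanSpace ℝ (Fin n))) :
    Subgroup (Equiv.Perm (EuclideanSpace ℝ (Fin n))) :=
  Subgroup.closure (affR Φ)

/-- The set `R₀ = {r_{α,0} : α ∈ Φ}` of reflections through the origin. -/
def linR {n : ℕ} (Φ : Set (EuclideanSpace ℝ (Fin n))) :
    Set (Equiv.Perm (EuclideanSpace ℝ (Fin n))) :=
  {w | ∃ α ∈ Φ, w = affRefl α 0}

/-- The finite reflection group `W₀` generated by the reflections fixing the origin. -/
def linW {n : ℕ} (Φ : Set (EuclideanSpace ℝ (Fin n))) :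
    Subgroup (Equiv.Perm (EuclideanSpace ℝ (Fin n))) :=
  Subgroup.closure (linR Φ)

/-- The translation `t_λ : x ↦ x + λ` as a permutation of `ℝⁿ`. -/
def transPerm {n : ℕ} (lam : EuclideanSpace ℝ (Fin n)) :
    Equiv.Perm (EuclideanSpace ℝ (Fin n)) :=
  Equiv.addRight lam

/-- The coroot lattice `L = ℤΦ∨`: all integral linear combinations of coroots. -/
def corootLattice {n : ℕ} (Φ : Set (EuclideanSpace ℝ (Fin n))) :
    AddSubgroup (EuclideanSpace ℝ (Fin n)) :=
  AddSubgroup.closure (coroot '' Φ)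

/-- The word length of `w` with respect to a set `R`: the minimal `m` such that `w`
is a product of `m` elements of `R` (`⊤` if there is no such product). -/
def wordLength {G : Type*} [Monoid G] (R : Set G) (w : G) : ℕ∞ :=
  sInf {m : ℕ∞ | ∃ l : List G, (∀ r ∈ l, r ∈ R) ∧ l.prod = w ∧ (l.length : ℕ∞) = m}

/-- `λ` has integral dimension `k` iff `k` is least such that `λ` is an integral
combination of `k` coroots. -/
def intDim {n : ℕ} (Φ : Set (EuclideanSpace ℝ (Fin n)))
    (lam : EuclideanSpace ℝ (Fin n)) : ℕ :=
  sInf {k : ℕ | ∃ (c : Fin k → ℤ) (α : Fin k → EuclideanSpace ℝ (Fin n)),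
    (∀ i, α i ∈ Φ) ∧ lam = ∑ i, c i • coroot (α i)}

/-- `λ` has real dimension `k` iff `k` is the least dimension of a subspace of `ℝⁿ`
spanned by a set of coroots and containing `λ`. -/
def realDim {n : ℕ} (Φ : Set (EuclideanSpace ℝ (Fin n)))
    (lam : EuclideanSpace ℝ (Fin n)) : ℕ :=
  sInf {k : ℕ | ∃ S : Set (EuclideanSpace ℝ (Fin n)), S ⊆ coroot '' Φ ∧
    lam ∈ Submodule.span ℝ S ∧ Module.finrank ℝ ↥(Submodule.span ℝ S) = k}

-- AUX START

variable {n : ℕ} {Φ : Set (EuclideanSpace ℝ (Fin n))}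

lemma affRefl_apply (α : EuclideanSpace ℝ (Fin n)) (i : ℤ) (x : EuclideanSpace ℝ (Fin n)) :
    affRefl α i x = x - (⟪x, α⟫ - (i : ℝ)) • coroot α := rfl

lemma affRefl_mul_self (α : EuclideanSpace ℝ (Fin n)) (i : ℤ) :
    affRefl α i * affRefl α i = 1 :=
  Equiv.ext fun x => affRefl_involutive α i x

lemma coroot_inner (α : EuclideanSpace ℝ (Fin n)) (h : ⟪α, α⟫ ≠ 0) :
    ⟪coroot α, α⟫ = 2 := by
  rw [coroot, real_inner_smul_left, div_mul_cancel₀ _ h]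

lemma trans_eq_refl_mul (α : EuclideanSpace ℝ (Fin n)) (h : ⟪α, α⟫ ≠ 0) (c : ℤ) :
    affRefl α c * affRefl α 0 = transPerm ((c : ℤ) • coroot α) := by
  refine Equiv.ext fun x => ?_
  have hc : (c : ℤ) • coroot α = (c : ℝ) • coroot α := (Int.cast_smul_eq_zsmul ℝ c _).symm
  simp only [Equiv.Perm.mul_apply, affRefl_apply, transPerm, Equiv.coe_addRight, hc]
  rw [inner_sub_left, real_inner_smul_left, coroot_inner α h]
  push_cast
  module

lemma refl_zero_fixes (α : EuclideanSpace ℝ (Fin n)) :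
    affRefl α 0 (0 : EuclideanSpace ℝ (Fin n)) = 0 := by
  simp [affRefl_apply]

lemma conj_refl (hΦ : IsRootSystem n Φ) {α β : EuclideanSpace ℝ (Fin n)}
    (hα : α ∈ Φ) (hβ : β ∈ Φ) (i : ℤ) :
    affRefl β 0 * affRefl α i * affRefl β 0 =
      affRefl (α - (2 * ⟪α, β⟫ / ⟪β, β⟫) • β) i := by
  have hb : ⟪β, β⟫ ≠ (0 : ℝ) := fun h => hΦ.nonzero β hβ (inner_self_eq_zero.mp h)
  have ha : ⟪α, α⟫ ≠ (0 : ℝ) := fun h => hΦ.nonzero α hα (inner_self_eq_zero.mp h)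
  set s : EuclideanSpace ℝ (Fin n) := α - (2 * ⟪α, β⟫ / ⟪β, β⟫) • β with hs
  have hss : ⟪s, s⟫ = ⟪α, α⟫ := by
    rw [hs]
    simp only [inner_sub_left, inner_sub_right, real_inner_smul_left, real_inner_smul_right,
      real_inner_comm β α]
    set A := ⟪α, α⟫
    set B := ⟪β, β⟫
    set C := ⟪α, β⟫
    field_simp
    ring
  refine Equiv.ext fun x => ?_
  simp only [Equiv.Perm.mul_apply, affRefl_apply, coroot, hss, hs]
  simp only [inner_sub_left, inner_sub_right, real_inner_smul_left, real_inner_smul_right,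
    real_inner_comm β α, real_inner_comm β x, real_inner_comm α x]
  set A := ⟪α, α⟫
  set B := ⟪β, β⟫
  set C := ⟪α, β⟫
  set X := ⟪x, α⟫
  set Y := ⟪x, β⟫
  match_scalars <;> field_simp <;> ring_nf <;> field_simp <;> ring

lemma conj_mem_affR (hΦ : IsRootSystem n Φ) {β : EuclideanSpace ℝ (Fin n)} (hβ : β ∈ Φ)
    {r : Equiv.Perm (EuclideanSpace ℝ (Fin n))} (hr : r ∈ affR Φ) :
    affRefl β 0 * r * affRefl β 0 ∈ affR Φ := by
  obtain ⟨α, hα, i, rfl⟩ := hr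
  rw [conj_refl hΦ hα hβ i]
  exact ⟨_, hΦ.reflect_mem β hβ α hα, i, rfl⟩

lemma map_conj_prod {G : Type*} [Group G] (b : G) (hb : b * b = 1) (l : List G) :
    (l.map fun r => b * r * b).prod = b * l.prod * b := by
  induction l with
  | nil => simpa using hb.symm
  | cons r t ih =>
      rw [List.map_cons, List.prod_cons, ih, List.prod_cons]
      rw [show b * r * b * (b * t.prod * b) = b * r * (b * b) * t.prod * b by group, hb]
      group

lemma exists_rep (lam : EuclideanSpace ℝ (Fin n)) (hlam : lam ∈ corootLattice Φ) :
    ∃ (k : ℕ) (c : Fin k → ℤ) (α : Fin k → EuclideanSpace ℝ (Fin n)),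
      (∀ i, α i ∈ Φ) ∧ lam = ∑ i, c i • coroot (α i) := by
  refine AddSubgroup.closure_induction ?_ ?_ ?_ ?_ hlam
  · rintro x ⟨β, hβ, rfl⟩
    exact ⟨1, fun _ => 1, fun _ => β, fun _ => hβ, by simp⟩
  · exact ⟨0, fun i => 0, fun i => i.elim0, fun i => i.elim0, by simp⟩
  · rintro x y - - ⟨k₁, c₁, α₁, hα₁, rfl⟩ ⟨k₂, c₂, α₂, hα₂, rfl⟩
    refine ⟨k₁ + k₂, Fin.append c₁ c₂, Fin.append α₁ α₂, ?_, ?_⟩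
    · intro i
      rcases Nat.lt_or_ge i.1 k₁ with h | h
      · have : i = Fin.castAdd k₂ ⟨i, h⟩ := by ext; simp
        rw [this, Fin.append_left]; exact hα₁ _
      · have : i = Fin.natAdd k₁ ⟨i - k₁, by omega⟩ := by ext; simp; omega
        rw [this, Fin.append_right]; exact hα₂ _
    · rw [Fin.sum_univ_add]
      simp [Fin.append_left, Fin.append_right]
  · rintro x - ⟨k, c, α, hα, rfl⟩
    exact ⟨k, fun i => -(c i), α, hα, by simp [Finset.sum_neg_distrib]⟩

lemma key_decomp (hΦ : IsRootSystem n Φ) :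
    ∀ (k : ℕ) (c : Fin k → ℤ) (α : Fin k → EuclideanSpace ℝ (Fin n)), (∀ i, α i ∈ Φ) →
    ∃ l m : List (Equiv.Perm (EuclideanSpace ℝ (Fin n))),
      (∀ r ∈ l, r ∈ affR Φ) ∧ (∀ r ∈ m, r ∈ linR Φ) ∧ l.length = k ∧ m.length = k ∧
      transPerm (∑ i, c i • coroot (α i)) = l.prod * m.prod := by
  intro k
  induction k with
  | zero =>
      intro c α hα
      refine ⟨[], [], by simp, by simp, rfl, rfl, ?_⟩
      simp only [Finset.univ_eq_empty, Finset.sum_empty, List.prod_nil, mul_one]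
      exact Equiv.ext fun x => by simp [transPerm]
  | succ k ih =>
      intro c α hα
      obtain ⟨l, m, hl, hm, hll, hml, heq⟩ := ih (fun i => c i.succ) (fun i => α i.succ)
        (fun i => hα i.succ)
      have h0 : ⟪α 0, α 0⟫ ≠ (0 : ℝ) := fun h =>
        hΦ.nonzero (α 0) (hα 0) (inner_self_eq_zero.mp h)
      set a := affRefl (α 0) (c 0)
      set b := affRefl (α 0) 0
      have hbb : b * b = 1 := affRefl_mul_self _ _
      refine ⟨a :: (l.map fun r => b * r * b), b :: m, ?_, ?_, by simp [hll], by simp [hml], ?_⟩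
      · rintro r hr
        rcases List.mem_cons.1 hr with rfl | hr
        · exact ⟨α 0, hα 0, c 0, rfl⟩
        · obtain ⟨r', hr', rfl⟩ := List.mem_map.1 hr
          exact conj_mem_affR hΦ (hα 0) (hl r' hr')
      · rintro r hr
        rcases List.mem_cons.1 hr with rfl | hr
        · exact ⟨α 0, hα 0, rfl⟩
        · exact hm r hr
      · have hsplit : transPerm (∑ i : Fin (k+1), c i • coroot (α i)) =
            (a * b) * transPerm (∑ i : Fin k, c i.succ • coroot (α i.succ)) := by
          rw [trans_eq_refl_mul _ h0, Fin.sum_univ_succ]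
          exact Equiv.ext fun x => by
            simp [transPerm, Equiv.Perm.mul_apply]
            abel
        rw [hsplit, heq, List.prod_cons, List.prod_cons, map_conj_prod b hbb]
        rw [show a * (b * l.prod * b) * (b * m.prod) = a * (b * l.prod * (b * b) * m.prod) by
          group, hbb]
        group

lemma linR_prod_fixes (m : List (Equiv.Perm (EuclideanSpace ℝ (Fin n))))
    (hm : ∀ r ∈ m, r ∈ linR Φ) : m.prod (0 : EuclideanSpace ℝ (Fin n)) = 0 := by
  induction m with
  | nil => simp
  | cons r t ih =>
      obtain ⟨α, hα, rfl⟩ := hm r List.mem_cons_self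
      rw [List.prod_cons, Equiv.Perm.mul_apply, ih fun r hr => hm r (List.mem_cons_of_mem _ hr),
        refl_zero_fixes]

theorem moving_points (n : ℕ) (hn : 1 ≤ n) (Φ : Set (EuclideanSpace ℝ (Fin n))) (hΦ : IsRootSystem n Φ)
    (lam : EuclideanSpace ℝ (Fin n)) (hlam : lam ∈ corootLattice Φ) (k : ℕ) (hk : intDim Φ lam = k) :
    wordLength (affR Φ) (transPerm lam) ≤ ((2 * k : ℕ) : ℕ∞) ∧
    ∃ u ∈ affW Φ, wordLength (affR Φ) u ≤ (k : ℕ∞) ∧ u (0 : EuclideanSpace ℝ (Fin n)) = lam := by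
  have hne : {j : ℕ | ∃ (c : Fin j → ℤ) (α : Fin j → EuclideanSpace ℝ (Fin n)),
      (∀ i, α i ∈ Φ) ∧ lam = ∑ i, c i • coroot (α i)}.Nonempty := by
    obtain ⟨j, c, α, hα, hrep⟩ := exists_rep lam hlam
    exact ⟨j, c, α, hα, hrep⟩
  have hmem := Nat.sInf_mem hne
  rw [show sInf _ = k from hk] at hmem
  obtain ⟨c, α, hα, hrep⟩ := hmem
  obtain ⟨l, m, hl, hm, hll, hml, heq⟩ := key_decomp hΦ k c α hα
  rw [← hrep] at heq
  constructor
  · refine sInf_le ⟨l ++ m, ?_, ?_, ?_⟩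
    · intro r hr
      rcases List.mem_append.1 hr with hr | hr
      · exact hl r hr
      · obtain ⟨β, hβ, rfl⟩ := hm r hr
        exact ⟨β, hβ, 0, rfl⟩
    · rw [List.prod_append, ← heq]
    · simp [hll, hml]; ring
  · refine ⟨l.prod, ?_, ?_, ?_⟩
    · exact list_prod_mem fun x hx => Subgroup.subset_closure (hl x hx)
    · exact sInf_le ⟨l, hl, rfl, by simp [hll]⟩
    · have h0 : m.prod (0 : EuclideanSpace ℝ (Fin n)) = 0 := linR_prod_fixes m hm
      have := congrFun (congrArg (fun e : Equiv.Perm _ => (e : _ → _)) heq) 0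
      simp only [Equiv.Perm.mul_apply, h0] at this
      rw [← this]
      simp [transPerm]

end
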